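/- arXiv:2405.19643 — 5 statements merged into one kernel-verified Lean document; each statement's English description precedes it below -/
import Mathlib

section
/- Let A : H → K and B : K → L be linear operators and let F range over an error basis of K (q^2 unitaries, pairwise trace-orthogonal, with ‖F‖ normalized so Tr(F†F)=dim K). Then the circuit tensors compose contravariantly: T(BA)^E_{E'} = Σ_F T(A)^E_F · T(B)^F_{E'}, where T(A)^E_F = (1/dim H) Tr(E† A† F A) and similarly for B and BA. -/
open Matrix Finset

/-- Circuit tensors compose contravariantly:
`T(BA)^E_{E'} = ∑_F T(A)^E_F · T(B)^F_{E'}` where `F` ranges over an error basis of `K`. -/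
theorem circuit_tensor_composition (dH dK dL : ℕ)
    (A : Matrix (Fin dK) (Fin dH) ℂ) (B : Matrix (Fin dL) (Fin dK) ℂ)
    (E : Matrix (Fin dH) (Fin dH) ℂ) (E' : Matrix (Fin dL) (Fin dL) ℂ)
    (hE : E ∈ Matrix.unitaryGroup (Fin dH) ℂ)
    (hE' : E' ∈ Matrix.unitaryGroup (Fin dL) ℂ)
    (F : Fin (dK ^ 2) → Matrix (Fin dK) (Fin dK) ℂ)
    (hFu : ∀ i, F i ∈ Matrix.unitaryGroup (Fin dK) ℂ)
    (hFo : ∀ i j, i ≠ j → ((F i)ᴴ * F j).trace = 0)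
    (hFn : ∀ i, ((F i)ᴴ * F i).trace = (dK : ℂ)) :
    (dH : ℂ)⁻¹ * (Eᴴ * (B * A)ᴴ * E' * (B * A)).trace =
      ∑ i, ((dH : ℂ)⁻¹ * (Eᴴ * Aᴴ * F i * A).trace) *
        ((dK : ℂ)⁻¹ * ((F i)ᴴ * Bᴴ * E' * B).trace) := by
  rcases Nat.eq_zero_or_pos dK with h0 | hpos
  · subst h0
    have hBA : B * A = 0 := by ext i j; simp [Matrix.mul_apply]
    have : ∑ i : Fin (0 ^ 2), ((dH : ℂ)⁻¹ * (Eᴴ * Aᴴ * F i * A).trace) *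
        ((0 : ℂ)⁻¹ * ((F i)ᴴ * Bᴴ * E' * B).trace) = 0 := by
      apply Finset.sum_eq_zero; intro i _; exact absurd i.2 (by simp)
    simpa [hBA] using this.symm
  have hdK : (dK : ℂ) ≠ 0 := Nat.cast_ne_zero.mpr hpos.ne'
  set M := Bᴴ * E' * B with hM
  have hli : LinearIndependent ℂ F := by
    rw [linearIndependent_iff']
    intro s c hc j hj
    have h := congrArg (fun X => ((F j)ᴴ * X).trace) hc
    simp only [Matrix.mul_sum, Matrix.mul_smul, trace_sum, trace_smul, Matrix.mul_zero,
      trace_zero, smul_eq_mul] at h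
    rw [Finset.sum_eq_single j (fun i _ hij => by rw [hFo j i (Ne.symm hij), mul_zero])
      (fun h' => absurd hj h')] at h
    rw [hFn j] at h
    exact (mul_eq_zero.mp h).resolve_right hdK
  have hcard : Fintype.card (Fin (dK ^ 2)) =
      Module.finrank ℂ (Matrix (Fin dK) (Fin dK) ℂ) := by
    simp [Module.finrank_matrix, sq]
  haveI : Nonempty (Fin (dK ^ 2)) := ⟨⟨0, by positivity⟩⟩
  let b := basisOfLinearIndependentOfCardEqFinrank hli hcard
  have hb : ⇑b = F := coe_basisOfLinearIndependentOfCardEqFinrank hli hcard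
  set c : Fin (dK ^ 2) → ℂ := fun i => b.repr M i with hc
  have hMsum : M = ∑ i, c i • F i := by
    conv_lhs => rw [← b.sum_repr M]
    simp [hb, hc]
  have hcoef : ∀ j, ((F j)ᴴ * M).trace = c j * dK := by
    intro j
    rw [hMsum]
    simp only [Matrix.mul_sum, Matrix.mul_smul, trace_sum, trace_smul, smul_eq_mul]
    rw [Finset.sum_eq_single j (fun i _ hij => by rw [hFo j i (Ne.symm hij), mul_zero])
      (by simp)]
    rw [hFn j]
  have hmat : Eᴴ * (B * A)ᴴ * E' * (B * A) = Eᴴ * Aᴴ * M * A := by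
    simp [hM, Matrix.conjTranspose_mul, Matrix.mul_assoc]
  rw [hmat]
  have hexp : (Eᴴ * Aᴴ * M * A).trace = ∑ i, c i * (Eᴴ * Aᴴ * F i * A).trace := by
    rw [hMsum]
    simp [Matrix.mul_sum, Matrix.sum_mul, Matrix.mul_smul, Matrix.smul_mul, trace_sum]
  rw [hexp, Finset.mul_sum]
  apply Finset.sum_congr rfl
  intro i _
  have : ((F i)ᴴ * Bᴴ * E' * B).trace = c i * dK := by
    rw [← hcoef i, hM, Matrix.mul_assoc, Matrix.mul_assoc, Matrix.mul_assoc]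
  rw [this]
  field_simp
end

section
/- Poisson summation for stabilizer codes: Let C be an [[n,k]]_q stabilizer code with stabilizer group S(C) ⊆ E^n and normalizer N(C) = {P ∈ E^n : ω(P,S) = 1 for all S ∈ S(C)}, where |S(C)| = q^{n-k} and |N(C)| = q^{n+k}. Let wt_1, wt_2 be weight functions on E^n with MacWilliams transforms Φ_1, Φ_2 (meaning Φ_i(u)^{wt_i(D)} = q^{-n} Σ_{E ∈ E^n} ω(D,E) u^{wt_i(E)} for all D). Then Σ_{D ∈ S(C)} Φ_1(u_1)^{wt_1(D)} Φ_2(u_2)^{wt_2(D)} = q^{-(n+k)} Σ_{E_1,E_2 ∈ E^n, E_1E_2 ∈ N(C)} u_1^{wt_1(E_1)} u_2^{wt_2(E_2)}. -/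
open Finset

/-- Poisson summation for stabilizer codes:
`∑_{D ∈ S(C)} Φ₁(u₁)^{wt₁(D)} Φ₂(u₂)^{wt₂(D)}
  = q^{-(n+k)} ∑_{E₁E₂ ∈ N(C)} u₁^{wt₁(E₁)} u₂^{wt₂(E₂)}`. -/
theorem poisson_summation_stabilizer (q n k : ℕ) (hq : 0 < q) (hkn : k ≤ n)
    {G : Type*} [CommGroup G] [Fintype G] [DecidableEq G]
    (ω : G → G → ℂ)
    (hbichar : ∀ D E₁ E₂, ω D (E₁ * E₂) = ω D E₁ * ω D E₂)
    (S Nrm : Finset G)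
    (hScard : S.card = q ^ (n - k)) (hNcard : Nrm.card = q ^ (n + k))
    (hdual₁ : ∀ E, ∑ D ∈ S, ω D E = if E ∈ Nrm then (q : ℂ) ^ ((n : ℤ) - k) else 0)
    (hdual₂ : ∀ E, ∑ D ∈ Nrm, ω D E = if E ∈ S then (q : ℂ) ^ ((n : ℤ) + k) else 0)
    (u₁ u₂ φ₁ φ₂ : G → ℂ)
    (hφ₁ : ∀ D, φ₁ D = (q : ℂ) ^ (-(n : ℤ)) * ∑ E, ω D E * u₁ E)
    (hφ₂ : ∀ D, φ₂ D = (q : ℂ) ^ (-(n : ℤ)) * ∑ E, ω D E * u₂ E) :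
    ∑ D ∈ S, φ₁ D * φ₂ D =
      (q : ℂ) ^ (-((n : ℤ) + k)) *
        ∑ p ∈ Finset.univ.filter (fun p : G × G => p.1 * p.2 ∈ Nrm),
          u₁ p.1 * u₂ p.2 := by
  have hq0 : (q : ℂ) ≠ 0 := Nat.cast_ne_zero.mpr hq.ne'
  have step1 : ∑ D ∈ S, φ₁ D * φ₂ D
      = ((q:ℂ)^(-(n:ℤ)) * (q:ℂ)^(-(n:ℤ))) *
        ∑ p : G × G, (u₁ p.1 * u₂ p.2) * ∑ D ∈ S, ω D (p.1 * p.2) := by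
    simp_rw [hbichar, Finset.mul_sum]
    rw [Finset.sum_comm]
    refine Finset.sum_congr rfl fun D hD => ?_
    rw [hφ₁, hφ₂, Fintype.sum_prod_type, mul_mul_mul_comm, Finset.sum_mul_sum]
    simp_rw [Finset.mul_sum]
    refine Finset.sum_congr rfl fun E₁ _ => Finset.sum_congr rfl fun E₂ _ => ?_
    ring
  rw [step1, Finset.sum_filter]
  simp_rw [hdual₁, mul_ite, mul_zero]
  have hite : ∀ (P : Prop) [Decidable P] (a c : ℂ),
      (if P then a * c else 0) = (if P then a else 0) * c := by
    intros P _ a c; split <;> simp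
  simp_rw [hite]
  rw [← Finset.sum_mul]
  have hc : (q:ℂ)^(-(n:ℤ)) * (q:ℂ)^(-(n:ℤ)) * (q:ℂ)^((n:ℤ)-(k:ℤ))
      = (q:ℂ)^(-((n:ℤ)+(k:ℤ))) := by
    rw [← zpow_add₀ hq0, ← zpow_add₀ hq0]; ring_nf
  linear_combination (∑ i : G × G, (if i.1 * i.2 ∈ Nrm then u₁ i.1 else 0) * u₂ i.2) * hc
end

section
/- Generalized Poisson summation: For an [[n,k]]_q stabilizer code C and weight functions wt_1,...,wt_m with MacWilliams transforms Φ_1,...,Φ_m, one has Σ_{D ∈ N(C)} Π_{j=1}^m Φ_j(u_j)^{wt_j(D)} = q^{-((m-1)n - k)} Σ_{E_1,...,E_m ∈ E^n, E_1⋯E_m ∈ S(C)} Π_{j=1}^m u_j^{wt_j(E_j)}. -/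
open Finset

/-- Generalized Poisson summation for stabilizer codes:
`∑_{D ∈ N(C)} ∏_j Φ_j(u_j)^{wt_j(D)}
  = q^{-((m-1)n - k)} ∑_{E₁⋯E_m ∈ S(C)} ∏_j u_j^{wt_j(E_j)}`. -/
theorem generalized_poisson_summation_stabilizer (q n k m : ℕ) (hq : 0 < q) (hkn : k ≤ n)
    {G : Type*} [CommGroup G] [Fintype G] [DecidableEq G]
    (ω : G → G → ℂ)
    (hbichar : ∀ D E₁ E₂, ω D (E₁ * E₂) = ω D E₁ * ω D E₂)
    (S Nrm : Finset G)
    (hScard : S.card = q ^ (n - k)) (hNcard : Nrm.card = q ^ (n + k))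
    (hdual₁ : ∀ E, ∑ D ∈ S, ω D E = if E ∈ Nrm then (q : ℂ) ^ ((n : ℤ) - k) else 0)
    (hdual₂ : ∀ E, ∑ D ∈ Nrm, ω D E = if E ∈ S then (q : ℂ) ^ ((n : ℤ) + k) else 0)
    (u φ : Fin m → G → ℂ)
    (hφ : ∀ j D, φ j D = (q : ℂ) ^ (-(n : ℤ)) * ∑ E, ω D E * u j E) :
    ∑ D ∈ Nrm, ∏ j, φ j D =
      (q : ℂ) ^ ((k : ℤ) - ((m : ℤ) - 1) * n) *
        ∑ Es ∈ Finset.univ.filter (fun Es : Fin m → G => ∏ j, Es j ∈ S),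
          ∏ j, u j (Es j) := by
  have hq0 : (q : ℂ) ≠ 0 := Nat.cast_ne_zero.mpr hq.ne'
  -- ω D 1 is idempotent
  have hidem : ∀ D, ω D 1 = 0 ∨ ω D 1 = 1 := by
    intro D
    have h := hbichar D 1 1
    rw [mul_one] at h
    rcases eq_or_ne (ω D 1) 0 with h0 | h0
    · exact Or.inl h0
    · right
      have : ω D 1 * 1 = ω D 1 * ω D 1 := by rw [mul_one]; exact h
      exact (mul_left_cancel₀ h0 this).symm
  have hker : ∀ D E, ω D 1 = 0 → ω D E = 0 := by
    intro D E h0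
    have h := hbichar D E 1
    rw [mul_one] at h
    rw [h, h0, mul_zero]
  -- a sum of terms each 0 or 1 that vanishes has all terms 0
  have real01 : ∀ (T : Finset G) (f : G → ℂ), (∀ D ∈ T, f D = 0 ∨ f D = 1) →
      (∑ D ∈ T, f D) = 0 → ∀ D ∈ T, f D = 0 := by
    intro T f hf hsum D hD
    have hre : ∑ D ∈ T, (f D).re = 0 := by
      rw [← Complex.re_sum, hsum]; simp
    have hnn : ∀ D ∈ T, 0 ≤ (f D).re := by
      intro D hD; rcases hf D hD with h | h <;> simp [h]
    have := (Finset.sum_eq_zero_iff_of_nonneg hnn).mp hre D hD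
    rcases hf D hD with h | h
    · exact h
    · rw [h] at this; norm_num at this
  have h1S : (1 : G) ∈ S := by
    by_contra h
    have h0 := hdual₂ 1
    rw [if_neg h] at h0
    have hall : ∀ D ∈ Nrm, ω D 1 = 0 :=
      real01 Nrm (fun D => ω D 1) (fun D _ => hidem D) h0
    have hSne : S.Nonempty := Finset.card_pos.mp (by rw [hScard]; exact pow_pos hq _)
    obtain ⟨E₀, hE₀⟩ := hSne
    have h2 := hdual₂ E₀
    rw [if_pos hE₀] at h2
    have h3 : (0 : ℂ) = (q : ℂ) ^ ((n : ℤ) + k) := by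
      rw [← h2]
      exact (Finset.sum_eq_zero fun D hD => hker D E₀ (hall D hD)).symm
    exact (zpow_ne_zero _ hq0) h3.symm
  have hN1 : ∀ D ∈ Nrm, ω D 1 = 1 := by
    have h0 := hdual₂ 1
    rw [if_pos h1S] at h0
    have hsum : ∑ D ∈ Nrm, ((1 : ℂ) - ω D 1) = 0 := by
      rw [Finset.sum_sub_distrib, h0, Finset.sum_const, nsmul_eq_mul, mul_one, hNcard]
      push_cast
      rw [zpow_add₀ hq0, zpow_natCast, zpow_natCast, pow_add]
      ring
    have hz := real01 Nrm (fun D => 1 - ω D 1)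
      (fun D _ => by rcases hidem D with h | h <;> simp [h]) hsum
    intro D hD
    have h := hz D hD
    have h' : (1 : ℂ) = ω D 1 := by linear_combination h
    exact h'.symm
  -- multiplicativity on Nrm
  have key : ∀ D ∈ Nrm, ∀ (Es : Fin m → G),
      ω D (∏ j, Es j) = ∏ j, ω D (Es j) := by
    intro D hD Es
    have h1 := hN1 D hD
    induction (Finset.univ : Finset (Fin m)) using Finset.cons_induction with
    | empty => simpa using h1
    | cons a s ha ih => rw [Finset.prod_cons, Finset.prod_cons, hbichar, ih]
  set C : ℂ := (q : ℂ) ^ (-(n : ℤ)) with hC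
  -- expand the product over j for each D ∈ Nrm
  have hDexp : ∀ D ∈ Nrm, ∏ j, φ j D =
      ∑ Es : Fin m → G, C ^ m * (ω D (∏ j, Es j) * ∏ j, u j (Es j)) := by
    intro D hD
    calc ∏ j, φ j D = ∏ j, (C * ∑ E, ω D E * u j E) :=
          Finset.prod_congr rfl fun j _ => hφ j D
      _ = C ^ m * ∏ j, ∑ E, ω D E * u j E := by
          rw [Finset.prod_mul_distrib, Finset.prod_const, Finset.card_univ, Fintype.card_fin]
      _ = C ^ m * ∑ Es ∈ Fintype.piFinset (fun _ : Fin m => (Finset.univ : Finset G)),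
            ∏ j, ω D (Es j) * u j (Es j) := by
          rw [Finset.prod_univ_sum]
      _ = ∑ Es : Fin m → G, C ^ m * (ω D (∏ j, Es j) * ∏ j, u j (Es j)) := by
          rw [Fintype.piFinset_univ, Finset.mul_sum]
          refine Finset.sum_congr rfl fun Es _ => ?_
          rw [Finset.prod_mul_distrib, key D hD Es]
  calc ∑ D ∈ Nrm, ∏ j, φ j D
      = ∑ D ∈ Nrm, ∑ Es : Fin m → G, C ^ m * (ω D (∏ j, Es j) * ∏ j, u j (Es j)) :=
        Finset.sum_congr rfl hDexp
    _ = ∑ Es : Fin m → G, C ^ m * ((∑ D ∈ Nrm, ω D (∏ j, Es j)) * ∏ j, u j (Es j)) := by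
        rw [Finset.sum_comm]
        refine Finset.sum_congr rfl fun Es _ => ?_
        rw [Finset.sum_mul, Finset.mul_sum]
    _ = ∑ Es : Fin m → G, C ^ m *
          ((if (∏ j, Es j) ∈ S then (q : ℂ) ^ ((n : ℤ) + k) else 0) * ∏ j, u j (Es j)) := by
        refine Finset.sum_congr rfl fun Es _ => ?_
        rw [hdual₂]
    _ = C ^ m * (q : ℂ) ^ ((n : ℤ) + k) *
          ∑ Es ∈ Finset.univ.filter (fun Es : Fin m → G => ∏ j, Es j ∈ S),
            ∏ j, u j (Es j) := by
        rw [Finset.mul_sum, Finset.sum_filter]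
        refine Finset.sum_congr rfl fun Es _ => ?_
        by_cases h : (∏ j, Es j) ∈ S <;> simp [h, mul_assoc]
    _ = (q : ℂ) ^ ((k : ℤ) - ((m : ℤ) - 1) * n) *
          ∑ Es ∈ Finset.univ.filter (fun Es : Fin m → G => ∏ j, Es j ∈ S),
            ∏ j, u j (Es j) := by
        congr 1
        rw [hC, ← zpow_natCast ((q : ℂ) ^ (-(n : ℤ))) m, ← zpow_mul, ← zpow_add₀ hq0]
        congr 1
        ring
end

section
/- Choi matrix composition: for completely positive maps A : L(H) → L(K) and B : L(K) → L(L) with Choi matrices T_A ∈ L(H⊗K) and T_B ∈ L(K⊗L), one has (I_H ⊗ ⟨β| ⊗ I_L)(T_A ⊗ T_B)(I_H ⊗ |β⟩ ⊗ I_L) = (1/dim K)^2 · T_{B∘A}, where |β⟩ ∈ K⊗K is the Bell state. -/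
open Matrix Finset

private lemma sum4_comm {ι₁ ι₂ ι₃ ι₄ : Type*} [Fintype ι₁] [Fintype ι₂] [Fintype ι₃] [Fintype ι₄]
    (f : ι₁ → ι₂ → ι₃ → ι₄ → ℂ) :
    ∑ a, ∑ b, ∑ c, ∑ d, f a b c d = ∑ c, ∑ d, ∑ a, ∑ b, f a b c d := by
  calc ∑ a, ∑ b, ∑ c, ∑ d, f a b c d
      = ∑ a, ∑ c, ∑ b, ∑ d, f a b c d :=
        Finset.sum_congr rfl fun a _ => Finset.sum_comm
    _ = ∑ c, ∑ a, ∑ b, ∑ d, f a b c d := Finset.sum_comm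
    _ = ∑ c, ∑ a, ∑ d, ∑ b, f a b c d :=
        Finset.sum_congr rfl fun c _ => Finset.sum_congr rfl fun a _ => Finset.sum_comm
    _ = ∑ c, ∑ d, ∑ a, ∑ b, f a b c d :=
        Finset.sum_congr rfl fun c _ => Finset.sum_comm

/-- Choi matrix composition:
`(I ⊗ ⟨β| ⊗ I)(T_A ⊗ T_B)(I ⊗ |β⟩ ⊗ I) = (1/dim K)² T_{B∘A}`, entrywise. -/
theorem choi_matrix_composition (dH dK dL J K : ℕ)
    (A : Fin J → Matrix (Fin dK) (Fin dH) ℂ)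
    (B : Fin K → Matrix (Fin dL) (Fin dK) ℂ)
    (TA : (Fin dH × Fin dK) → (Fin dH × Fin dK) → ℂ)
    (TB : (Fin dK × Fin dL) → (Fin dK × Fin dL) → ℂ)
    (TBA : (Fin dH × Fin dL) → (Fin dH × Fin dL) → ℂ)
    (β : Fin dK × Fin dK → ℂ)
    (hβ : ∀ p, β p = if p.1 = p.2 then ((Real.sqrt dK : ℂ))⁻¹ else 0)
    (hTA : ∀ p p', TA p p' = ∑ j,
        (((Real.sqrt dH : ℂ))⁻¹ * A j p.2 p.1) *
          star (((Real.sqrt dH : ℂ))⁻¹ * A j p'.2 p'.1))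
    (hTB : ∀ p p', TB p p' = ∑ k,
        (((Real.sqrt dK : ℂ))⁻¹ * B k p.2 p.1) *
          star (((Real.sqrt dK : ℂ))⁻¹ * B k p'.2 p'.1))
    (hTBA : ∀ p p', TBA p p' = ∑ k, ∑ j,
        (((Real.sqrt dH : ℂ))⁻¹ * (B k * A j) p.2 p.1) *
          star (((Real.sqrt dH : ℂ))⁻¹ * (B k * A j) p'.2 p'.1)) :
    ∀ (x : Fin dH) (w : Fin dL) (x' : Fin dH) (w' : Fin dL),
      (∑ y : Fin dK, ∑ z : Fin dK, ∑ y' : Fin dK, ∑ z' : Fin dK,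
          star (β (y, z)) * TA (x, y) (x', y') * TB (z, w) (z', w') * β (y', z')) =
        ((dK : ℂ)⁻¹) ^ 2 * TBA (x, w) (x', w') := by
  intro x w x' w'
  have hs : ((Real.sqrt dK : ℂ))⁻¹ * ((Real.sqrt dK : ℂ))⁻¹ = (dK : ℂ)⁻¹ := by
    rw [← mul_inv, ← Complex.ofReal_mul, Real.mul_self_sqrt (Nat.cast_nonneg _)]
    norm_num
  simp only [hβ, hTA, hTB, hTBA, Matrix.mul_apply, apply_ite (star : ℂ → ℂ), star_zero,
    star_inv₀, star_mul', ite_mul, mul_ite, zero_mul, mul_zero,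
    Complex.star_def, Complex.conj_ofReal]
  simp only [Finset.sum_ite_eq, Finset.sum_ite_eq', Finset.mem_univ, if_true]
  simp only [map_sum, _root_.map_mul, Finset.mul_sum, Finset.sum_mul]
  conv_lhs => enter [2]; intro y; rw [Finset.sum_comm]
  simp only [Finset.sum_ite_eq, Finset.mem_univ, if_true]
  rw [sum4_comm]
  refine Finset.sum_congr rfl fun k _ => Finset.sum_congr rfl fun j _ => ?_
  rw [Finset.sum_comm]
  refine Finset.sum_congr rfl fun y' _ => Finset.sum_congr rfl fun y _ => ?_
  linear_combination (((Real.sqrt dK : ℂ))⁻¹ * ((Real.sqrt dK : ℂ))⁻¹ + (dK : ℂ)⁻¹) *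
    (((Real.sqrt dH : ℂ))⁻¹ * A j y x * ((Real.sqrt dH : ℂ))⁻¹ *
      (starRingEnd ℂ) (A j y' x') * B k w y * (starRingEnd ℂ) (B k w' y')) * hs
end

section
/- MacWilliams relation between process matrix and circuit tensor: Let M : L(H) → L(H) be a quantum channel with process matrix χ^E_{E'} relative to an error basis E (defined by M(ρ) = Σ_{E,E'} χ^E_{E'} (E')† ρ E), and circuit tensor T(M)^F_{F'} = (1/dim H) Σ_j Tr(F† A_j† F' A_j) for any Kraus decomposition {A_j}. Then T(M)^F_{F'} = (1/dim H) Σ_{E,E'} χ^E_{E'} Tr(F† E F' (E')†). Equivalently T(M) = dim(H)·Ψ(χ) where Ψ(e^E_{E'}) = dim(H)^{-2} Σ_{F,F'} Tr(F† E F' (E')†) e^F_{F'}. -/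
open Matrix Finset

/-- MacWilliams relation between the process matrix `χ` and the circuit tensor
of a quantum channel: `T(M)^F_{F'} = (1/dim H) ∑_{E,E'} χ^E_{E'} Tr(F† E F' (E')†)`. -/
theorem process_matrix_macwilliams (d J : ℕ) (hd : 0 < d)
    (ℰ : Fin (d ^ 2) → Matrix (Fin d) (Fin d) ℂ)
    (hunit : ∀ e, ℰ e ∈ Matrix.unitaryGroup (Fin d) ℂ)
    (horth : ∀ e e', e ≠ e' → ((ℰ e)ᴴ * ℰ e').trace = 0)
    (A : Fin J → Matrix (Fin d) (Fin d) ℂ)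
    (χ : Fin (d ^ 2) → Fin (d ^ 2) → ℂ)
    (hχ : ∀ ρ : Matrix (Fin d) (Fin d) ℂ,
        ∑ j, A j * ρ * (A j)ᴴ = ∑ e, ∑ e', χ e e' • ((ℰ e')ᴴ * ρ * ℰ e)) :
    ∀ f f' : Fin (d ^ 2),
      (d : ℂ)⁻¹ * ∑ j, ((ℰ f)ᴴ * (A j)ᴴ * ℰ f' * A j).trace =
        (d : ℂ)⁻¹ * ∑ e, ∑ e', χ e e' * ((ℰ f)ᴴ * ℰ e * ℰ f' * (ℰ e')ᴴ).trace := by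
  intro f f'
  congr 1
  have h := congrArg (fun X => (X * ℰ f').trace) (hχ (ℰ f)ᴴ)
  simp only [Finset.sum_mul, Matrix.trace_sum, Matrix.smul_mul, Matrix.trace_smul,
    smul_eq_mul] at h
  calc ∑ j, ((ℰ f)ᴴ * (A j)ᴴ * ℰ f' * A j).trace
      = ∑ j, (A j * (ℰ f)ᴴ * (A j)ᴴ * ℰ f').trace := by
        refine Finset.sum_congr rfl fun j _ => ?_
        rw [Matrix.trace_mul_comm]
        congr 1
        noncomm_ring
    _ = ∑ e, ∑ e', χ e e' * ((ℰ e')ᴴ * (ℰ f)ᴴ * ℰ e * ℰ f').trace := h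
    _ = ∑ e, ∑ e', χ e e' * ((ℰ f)ᴴ * ℰ e * ℰ f' * (ℰ e')ᴴ).trace := by
        refine Finset.sum_congr rfl fun e _ => Finset.sum_congr rfl fun e' _ => ?_
        congr 1
        rw [show (ℰ e')ᴴ * (ℰ f)ᴴ * ℰ e * ℰ f' = (ℰ e')ᴴ * ((ℰ f)ᴴ * ℰ e * ℰ f') from by
          noncomm_ring, Matrix.trace_mul_comm]
end
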